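/- (Corollary 4.5, scalar outcomes and moment distinguishers.) Let Y = [−1,1], let s : Y → ℝ^{2d+1} be s(y) := (1, y, y², …, y^{2d}), and let Z ⊆ ℝ^{2d+1} be the set of all vectors (∫ y⁰ dμ, …, ∫ y^{2d} dμ) as μ ranges over Borel probability measures on [−1,1]. Suppose ‖z − z′‖_2 ≤ D for all z, z′ ∈ Z and ‖Φ(x,p)‖_op² ≤ G for all x ∈ X, p ∈ Z. Let y_1,…,y_T ∈ [−1,1] be realized outcomes with targets z_t := s(y_t), and suppose the EVI condition holds with tolerances ε_t ≤ G·D²/2. Suppose for each t and each p in the support of D_t, μ_{t,p} is a finitely supported probability measure on [−1,1] with E_{ỹ∼μ_{t,p}}[s(ỹ)] = p. Then for every h ∈ H, the distinguisher f(x,p,y) := ⟨h, Φ(x,p)(s(y))⟩_H satisfies OIGap_T(f) ≤ ‖h‖_H · sqrt( Σ_{t=1}^T E_{p∼D_t}[ ‖Φ(x_t,p)(p − s(y_t))‖_H² ] + G·D²·T ). -/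

import Mathlib

open scoped BigOperators RealInnerProductSpace
open MeasureTheory

/-- A finitely supported probability distribution, given by finitely many
weighted atoms. -/
structure FinDist (α : Type*) where
  n : ℕ
  w : Fin n → ℝ
  pt : Fin n → α
  w_nonneg : ∀ i, 0 ≤ w i
  w_sum : ∑ i, w i = 1

namespace FinDist

noncomputable def exp {α V : Type*} [AddCommMonoid V] [Module ℝ V]
    (D : FinDist α) (f : α → V) : V :=
  ∑ i, D.w i • f (D.pt i)

def support {α : Type*} (D : FinDist α) : Set α :=
  {a | ∃ i, D.w i ≠ 0 ∧ D.pt i = a}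

end FinDist

/-- The statistic map `s(y) = (1, y, y², …, y^{2d})`. -/
noncomputable def smom (d : ℕ) (y : ℝ) : EuclideanSpace ℝ (Fin (2 * d + 1)) :=
  (WithLp.equiv 2 (∀ _ : Fin (2 * d + 1), ℝ)).symm fun i => y ^ (i : ℕ)

/-- The truncated moment set: vectors of the first `2d+1` moments
`(∫ y⁰ dμ, …, ∫ y^{2d} dμ)` of Borel probability measures on `[−1,1]`. -/
def momentSet (d : ℕ) : Set (EuclideanSpace ℝ (Fin (2 * d + 1))) :=
  {z | ∃ μ : Measure ℝ, IsProbabilityMeasure μ ∧ μ (Set.Icc (-1 : ℝ) 1)ᶜ = 0 ∧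
    ∀ i : Fin (2 * d + 1), z i = ∫ y', y' ^ (i : ℕ) ∂μ}

/-!
Since `μ_{t,p}` has mean statistic `p`, the round-`t` gap of the distinguisher
`⟪h, Φ(x,p)(s(y))⟫` equals `⟪h, w_t⟫`, so the total gap is `⟪h, M_T⟫` and Cauchy–Schwarz
reduces the claim to a bound on `‖M_T‖²`. Expanding `‖M_{t+1}‖² = ‖M_t‖² + 2⟪M_t, w_t⟫ + ‖w_t‖²`,
the cross term is controlled by the EVI condition tested at the realized target `z = s(y_t) ∈ Z`
(the moment vector of a Dirac mass), and `‖w_t‖²` by Jensen's inequality.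
-/

open Finset

namespace FinDist

variable {α V : Type*}

theorem map_exp [AddCommMonoid V] [Module ℝ V] {W F : Type*} [AddCommMonoid W] [Module ℝ W]
    [FunLike F V W] [LinearMapClass F ℝ V W] (D : FinDist α) (L : F) (f : α → V) :
    L (D.exp f) = D.exp (fun a => L (f a)) := by
  simp [exp, map_sum, map_smul]

theorem inner_exp {E : Type*} [NormedAddCommGroup E] [InnerProductSpace ℝ E]
    (D : FinDist α) (u : E) (f : α → E) :
    ⟪u, D.exp f⟫ = D.exp (fun a => ⟪u, f a⟫) :=
  D.map_exp (innerₛₗ ℝ u) f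

theorem exp_sub [AddCommGroup V] [Module ℝ V] (D : FinDist α) (f g : α → V) :
    D.exp (fun a => f a - g a) = D.exp f - D.exp g := by
  simp [exp, smul_sub, sum_sub_distrib]

theorem exp_congr [AddCommMonoid V] [Module ℝ V] (D : FinDist α) {f g : α → V}
    (hfg : ∀ a ∈ D.support, f a = g a) : D.exp f = D.exp g := by
  refine sum_congr rfl fun i _ => ?_
  by_cases hw : D.w i = 0
  · simp [hw]
  · rw [hfg _ ⟨i, hw, rfl⟩]

end FinDist

theorem ConvexOn.map_finDist_exp_le {α E : Type*} [AddCommGroup E] [Module ℝ E] {f : E → ℝ}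
    (hf : ConvexOn ℝ Set.univ f) (D : FinDist α) (g : α → E) :
    f (D.exp g) ≤ D.exp (fun a => f (g a)) :=
  hf.map_sum_le (fun i _ => D.w_nonneg i) D.w_sum fun _ _ => Set.mem_univ _

theorem FinDist.norm_exp_sq_le {α E : Type*} [NormedAddCommGroup E] [NormedSpace ℝ E]
    (D : FinDist α) (f : α → E) : ‖D.exp f‖ ^ 2 ≤ D.exp (fun a => ‖f a‖ ^ 2) :=
  ((convexOn_norm convex_univ).pow (fun _ _ => norm_nonneg _) 2).map_finDist_exp_le D f

theorem norm_sum_range_sq_le {E : Type*} [NormedAddCommGroup E] [InnerProductSpace ℝ E]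
    (w : ℕ → E) (a b : ℕ → ℝ) (n : ℕ)
    (hinner : ∀ t < n, 2 * ⟪∑ τ ∈ range t, w τ, w t⟫ ≤ a t)
    (hnorm : ∀ t < n, ‖w t‖ ^ 2 ≤ b t) :
    ‖∑ t ∈ range n, w t‖ ^ 2 ≤ ∑ t ∈ range n, (a t + b t) := by
  induction n with
  | zero => simp
  | succ n ih =>
    have hprev := ih (fun t ht => hinner t (by omega)) (fun t ht => hnorm t (by omega))
    rw [sum_range_succ, sum_range_succ, norm_add_sq_real]
    linarith [hinner n n.lt_succ_self, hnorm n n.lt_succ_self]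

theorem smom_mem_momentSet {d : ℕ} {y : ℝ} (hy : y ∈ Set.Icc (-1 : ℝ) 1) :
    smom d y ∈ momentSet d := by
  refine ⟨Measure.dirac y, inferInstance, ?_, fun i => ?_⟩
  · simp [Measure.dirac_apply' _ measurableSet_Icc.compl, hy]
  · rw [integral_dirac]
    rfl

theorem FinDist.exp_inner_sub_exp_exp_inner {α β V E : Type*} [NormedAddCommGroup V]
    [NormedSpace ℝ V] [NormedAddCommGroup E] [InnerProductSpace ℝ E]
    (D : FinDist α) (μ : α → FinDist β) (stat : β → V) (mean : α → V) (L : α → V →L[ℝ] E)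
    (hμ : ∀ a ∈ D.support, (μ a).exp stat = mean a) (u : E) (v : V) :
    D.exp (fun a => ⟪u, L a v⟫) - D.exp (fun a => (μ a).exp (fun b => ⟪u, L a (stat b)⟫)) =
      ⟪u, D.exp (fun a => L a (v - mean a))⟫ := by
  rw [← D.exp_sub, D.inner_exp]
  refine D.exp_congr fun a ha => ?_
  rw [← (μ a).inner_exp, ← (μ a).map_exp, hμ a ha, map_sub, inner_sub_right]

theorem stmt_6_general
    {H : Type*} [NormedAddCommGroup H] [InnerProductSpace ℝ H]
    {X : Type*} {d : ℕ}
    (Φ : X → EuclideanSpace ℝ (Fin (2 * d + 1)) →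
      (EuclideanSpace ℝ (Fin (2 * d + 1)) →L[ℝ] H))
    (Dm G : ℝ)
    (T : ℕ)
    (x : ℕ → X) (y : ℕ → ℝ) (hy : ∀ t < T, y t ∈ Set.Icc (-1 : ℝ) 1)
    (D : ℕ → FinDist (EuclideanSpace ℝ (Fin (2 * d + 1))))
    (ε : ℕ → ℝ) (hεle : ∀ t < T, ε t ≤ G * Dm ^ 2 / 2)
    (hEVI : ∀ t < T, ∀ z' ∈ momentSet d,
      (D t).exp (fun p =>
        (⟪(∑ τ ∈ Finset.range t, (D τ).exp (fun q => Φ (x τ) q (smom d (y τ) - q))),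
          Φ (x t) p (z' - p)⟫)) ≤ ε t)
    (μ : ℕ → EuclideanSpace ℝ (Fin (2 * d + 1)) → FinDist ℝ)
    (hμ : ∀ t < T, ∀ p ∈ (D t).support, (μ t p).exp (fun y' => smom d y') = p)
    (h : H) :
    |(∑ t ∈ Finset.range T, (D t).exp (fun p => (⟪h, Φ (x t) p (smom d (y t))⟫)))
      - (∑ t ∈ Finset.range T, (D t).exp (fun p =>
          (μ t p).exp (fun y' => (⟪h, Φ (x t) p (smom d y')⟫))))| ≤
      ‖h‖ * Real.sqrt
        ((∑ t ∈ Finset.range T,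
            (D t).exp (fun p => ‖Φ (x t) p (p - smom d (y t))‖ ^ 2))
          + G * Dm ^ 2 * (T : ℝ)) := by
  set w : ℕ → H := fun t => (D t).exp (fun q => Φ (x t) q (smom d (y t) - q))
  have hgap : ∀ t < T, (D t).exp (fun p => ⟪h, Φ (x t) p (smom d (y t))⟫) -
      (D t).exp (fun p => (μ t p).exp (fun y' => ⟪h, Φ (x t) p (smom d y')⟫)) = ⟪h, w t⟫ :=
    fun t ht => (D t).exp_inner_sub_exp_exp_inner _ _ id _ (hμ t ht) h _
  have hcross : ∀ t < T, 2 * ⟪∑ τ ∈ range t, w τ, w t⟫ ≤ G * Dm ^ 2 := fun t ht => by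
    have := hEVI t ht _ (smom_mem_momentSet (hy t ht))
    rw [← (D t).inner_exp] at this
    linarith [hεle t ht]
  have hjensen : ∀ t < T, ‖w t‖ ^ 2 ≤ (D t).exp (fun p => ‖Φ (x t) p (p - smom d (y t))‖ ^ 2) :=
    fun t _ => ((D t).norm_exp_sq_le _).trans_eq <|
      (D t).exp_congr fun p _ => by rw [← neg_sub, map_neg, norm_neg]
  have hM := norm_sum_range_sq_le w _ _ T hcross hjensen
  rw [sum_add_distrib, sum_const, card_range, nsmul_eq_mul, add_comm] at hM
  rw [← sum_sub_distrib, sum_congr rfl fun t ht => hgap t (mem_range.mp ht), ← inner_sum]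
  calc |⟪h, ∑ t ∈ range T, w t⟫| ≤ ‖h‖ * ‖∑ t ∈ range T, w t‖ := abs_real_inner_le_norm _ _
    _ ≤ _ := by
      gcongr
      exact Real.le_sqrt_of_sq_le (by linarith)

/-- Corollary 4.5, scalar outcomes and moment distinguishers. -/
theorem stmt_6
    {H : Type*} [NormedAddCommGroup H] [InnerProductSpace ℝ H] [CompleteSpace H]
    {X : Type*} [Nonempty X] {d : ℕ} (hd : 1 ≤ d)
    (Φ : X → EuclideanSpace ℝ (Fin (2 * d + 1)) →
      (EuclideanSpace ℝ (Fin (2 * d + 1)) →L[ℝ] H))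
    (Dm G : ℝ)
    (hDiam : ∀ z ∈ momentSet d, ∀ z' ∈ momentSet d, ‖z - z'‖ ≤ Dm)
    (hG : ∀ (x : X), ∀ p ∈ momentSet d, ‖Φ x p‖ ^ 2 ≤ G)
    (T : ℕ) (hT : 1 ≤ T)
    (x : ℕ → X) (y : ℕ → ℝ) (hy : ∀ t < T, y t ∈ Set.Icc (-1 : ℝ) 1)
    (D : ℕ → FinDist (EuclideanSpace ℝ (Fin (2 * d + 1))))
    (hD : ∀ t < T, (D t).support ⊆ momentSet d)
    (ε : ℕ → ℝ) (hε : ∀ t < T, 0 ≤ ε t) (hεle : ∀ t < T, ε t ≤ G * Dm ^ 2 / 2)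
    (hEVI : ∀ t < T, ∀ z' ∈ momentSet d,
      (D t).exp (fun p =>
        (⟪(∑ τ ∈ Finset.range t, (D τ).exp (fun q => Φ (x τ) q (smom d (y τ) - q))),
          Φ (x t) p (z' - p)⟫)) ≤ ε t)
    (μ : ℕ → EuclideanSpace ℝ (Fin (2 * d + 1)) → FinDist ℝ)
    (hμY : ∀ t < T, ∀ p ∈ (D t).support, ∀ k, (μ t p).pt k ∈ Set.Icc (-1 : ℝ) 1)
    (hμ : ∀ t < T, ∀ p ∈ (D t).support, (μ t p).exp (fun y' => smom d y') = p)
    (h : H) :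
    |(∑ t ∈ Finset.range T, (D t).exp (fun p => (⟪h, Φ (x t) p (smom d (y t))⟫)))
      - (∑ t ∈ Finset.range T, (D t).exp (fun p =>
          (μ t p).exp (fun y' => (⟪h, Φ (x t) p (smom d y')⟫))))| ≤
      ‖h‖ * Real.sqrt
        ((∑ t ∈ Finset.range T,
            (D t).exp (fun p => ‖Φ (x t) p (p - smom d (y t))‖ ^ 2))
          + G * Dm ^ 2 * (T : ℝ)) :=
  stmt_6_general Φ Dm G T x y hy D ε hεle hEVI μ hμ h
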